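/- Let p ∈ P and I ⊆ P. Then φ_p ∈ C_I if and only if p belongs to the ideal ⟨I⟩ of P generated by I. -/

import Mathlib

universe u v

/-- A clone on `X`: a set of finitary operations (of each arity `n + 1 ≥ 1`)
containing all projections and closed under composition. -/
structure Clone (X : Type u) where
  carrier : ∀ n : ℕ, Set ((Fin (n + 1) → X) → X)
  proj_mem : ∀ (n : ℕ) (i : Fin (n + 1)), (fun x => x i) ∈ carrier n
  comp_mem : ∀ {m n : ℕ} (f : (Fin (m + 1) → X) → X)
      (g : Fin (m + 1) → (Fin (n + 1) → X) → X),
      f ∈ carrier m → (∀ i, g i ∈ carrier n) →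
      (fun x => f fun i => g i x) ∈ carrier n

namespace Clone

variable {X : Type u}

theorem carrier_injective : Function.Injective (Clone.carrier (X := X)) := by
  rintro ⟨c, _, _⟩ ⟨d, _, _⟩ h
  simpa using h

instance : PartialOrder (Clone X) where
  le C D := ∀ n, C.carrier n ⊆ D.carrier n
  le_refl _ _ := subset_rfl
  le_trans _ _ _ h₁ h₂ n := (h₁ n).trans (h₂ n)
  le_antisymm _ _ h₁ h₂ :=
    carrier_injective (funext fun n => subset_antisymm (h₁ n) (h₂ n))

instance : InfSet (Clone X) where
  sInf S :=
    { carrier := fun n => ⋂ C ∈ S, C.carrier n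
      proj_mem := fun n i => Set.mem_iInter₂.2 fun C _ => C.proj_mem n i
      comp_mem := fun f g hf hg => Set.mem_iInter₂.2 fun C hC =>
        C.comp_mem f g (Set.mem_iInter₂.1 hf C hC)
          fun i => Set.mem_iInter₂.1 (hg i) C hC }

/-- The lattice `Cl(X)` of all clones on `X` is a complete lattice
(with infima given by intersection). -/
instance : CompleteLattice (Clone X) :=
  completeLatticeOfInf (Clone X) (fun S =>
    ⟨fun C hC n _ hx => Set.mem_iInter₂.1 hx C hC,
     fun _ hD n _ hx => Set.mem_iInter₂.2 fun C hC => hD hC n hx⟩)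

/-- The clone generated by a family `F` of operations:
the smallest clone whose carrier contains `F`. -/
def cloneGen (F : ∀ n : ℕ, Set ((Fin (n + 1) → X) → X)) : Clone X :=
  sInf {C : Clone X | ∀ n, F n ⊆ C.carrier n}

end Clone

attribute [local instance] Classical.propDecidable

noncomputable section Construction

variable {X : Type u} {P : Type v} [SemilatticeSup P]
variable (e0 e1 e2 e4 : X) (Af : P → Set X)

/-- `A = X ∖ {0, 1, 2, 4}`. -/
def Aset : Set X := ({e0, e1, e2, e4} : Set X)ᶜ

/-- The unary function `φ_p`: the characteristic function of `A_p` on `A`,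
fixing `2` and sending `{0, 1, 4}` to `4`. -/
def phi (p : P) (x : X) : X :=
  if x ∈ Af p then e1
  else if x ∈ Aset e0 e1 e2 e4 then e0
  else if x = e2 then e2
  else e4

/-- The ternary function `m_p^{q₁,q₂}`. -/
def mOp (p q1 q2 : P) (x y z : X) : X :=
  if y = phi e0 e1 e2 e4 Af q1 x ∧ z = phi e0 e1 e2 e4 Af q2 x then
    phi e0 e1 e2 e4 Af p x
  else if (x = e2 ∨ y = e2 ∨ z = e2) ∧ y ≠ e1 ∧ y ≠ e4 ∧ z ≠ e1 ∧ z ≠ e4 then e2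
  else e4

/-- `φ_p` as a unary operation (member of arity-1 part of a clone). -/
def phi1 (p : P) : (Fin 1 → X) → X := fun x => phi e0 e1 e2 e4 Af p (x 0)

/-- `m_p^{q₁,q₂}` as a ternary operation. -/
def m3 (p q1 q2 : P) : (Fin 3 → X) → X :=
  fun x => mOp e0 e1 e2 e4 Af p q1 q2 (x 0) (x 1) (x 2)

/-- The family `Φ_Q = {φ_p : p ∈ Q}`, as a family of operations indexed by arity. -/
def PhiFam (Q : Set P) : ∀ n : ℕ, Set ((Fin (n + 1) → X) → X)
  | 0 => {f | ∃ p ∈ Q, f = phi1 e0 e1 e2 e4 Af p}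
  | _ + 1 => ∅

/-- The family `M = {m_p^{q₁,q₂} : p ≤ q₁ ∨ q₂}`, as a family of operations indexed by arity. -/
def MFam : ∀ n : ℕ, Set ((Fin (n + 1) → X) → X)
  | 2 => {f | ∃ p q1 q2 : P, p ≤ q1 ⊔ q2 ∧ f = m3 e0 e1 e2 e4 Af p q1 q2}
  | _ => ∅

/-- The clone `C = ⟨Φ ∪ M⟩`. -/
def CClone : Clone X :=
  Clone.cloneGen fun n => PhiFam e0 e1 e2 e4 Af Set.univ n ∪ MFam e0 e1 e2 e4 Af n

/-- A function depends on its `i`-th variable iff it takes different values on two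
tuples differing only in the `i`-th coordinate. -/
def DependsOnVar {n : ℕ} (t : (Fin n → X) → X) (i : Fin n) : Prop :=
  ∃ a b : Fin n → X, (∀ j, j ≠ i → a j = b j) ∧ t a ≠ t b

/-- A unary function is distracted iff it takes a value in `{2, 4}` somewhere on `A`. -/
def Distracted (f : X → X) : Prop :=
  ∃ a ∈ Aset e0 e1 e2 e4, f a = e2 ∨ f a = e4

/-- The unary function `X → X` corresponding to a unary operation. -/
def toFun1 (u : (Fin 1 → X) → X) : X → X := fun a => u fun _ => a

/-- An `n`-ary member of `C` is unspoilt iff some substitution of unary members of `C`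
into it yields an element of `Φ`. -/
def Unspoilt {n : ℕ} (t : (Fin (n + 1) → X) → X) : Prop :=
  ∃ ts : Fin (n + 1) → (Fin 1 → X) → X,
    (∀ i, ts i ∈ (CClone e0 e1 e2 e4 Af).carrier 0) ∧
    (fun x : Fin 1 → X => t fun i => ts i x) ∈ PhiFam e0 e1 e2 e4 Af Set.univ 0

/-- The family `S` of all spoilt members of `C`. -/
def SpoiltFam (n : ℕ) : Set ((Fin (n + 1) → X) → X) :=
  {t | t ∈ (CClone e0 e1 e2 e4 Af).carrier n ∧ ¬ Unspoilt e0 e1 e2 e4 Af t}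

/-- The clone `C_I = ⟨Φ_I ∪ M ∪ S⟩`. -/
def CI (I : Set P) : Clone X :=
  Clone.cloneGen fun n =>
    PhiFam e0 e1 e2 e4 Af I n ∪ MFam e0 e1 e2 e4 Af n ∪ SpoiltFam e0 e1 e2 e4 Af n

end Construction

/-- An ideal of a join-semilattice: a downward closed subset closed under finite joins. -/
def IsIdealP {P : Type v} [SemilatticeSup P] (I : Set P) : Prop :=
  (∀ p q : P, p ≤ q → q ∈ I → p ∈ I) ∧ ∀ p q : P, p ∈ I → q ∈ I → p ⊔ q ∈ I

/-- The ideal of `P` generated by a subset `I`. -/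
def idealGen {P : Type v} [SemilatticeSup P] (I : Set P) : Set P :=
  ⋂₀ {J : Set P | IsIdealP J ∧ I ⊆ J}

/-! Since `m_p^{q₁,q₂}(x, φ_{q₁} x, φ_{q₂} x) = φ_p x`, the set `{q | φ_q ∈ C_I}` is an ideal, and it
contains `I`.

Conversely, call a unary function `J`-tame if it is distracted, the identity, or `φ_q` with `q ∈ J`.
For an ideal `J ⊇ I`, the members of `C` sending every tuple of `J`-tame unary members of `C` to a
`J`-tame function form a clone containing `Φ_I`, `M` and `S`. Indeed, `φ_r` sends a point of `A` that
a tame function moves off `A` to `2` or `4`; a composite of `m_p^{q₁,q₂}` is distracted unless it is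
fed exactly `(id, φ_{q₁}, φ_{q₂})`, which forces `q₁, q₂ ∈ J` and hence `p ∈ J`; and a spoilt
function never yields any `φ_q`. For `J = P` this shows that all unary members of `C` are tame.
Evaluating `φ_p ∈ C_I` at the identity then gives `p ∈ ⟨I⟩`, because `φ_p` is neither distracted nor
the identity and `q ↦ φ_q` is injective. -/

namespace Clone

variable {X : Type u}

theorem subset_cloneGen (F : ∀ n : ℕ, Set ((Fin (n + 1) → X) → X)) (n : ℕ) :
    F n ⊆ (cloneGen F).carrier n :=
  fun _ ht => Set.mem_iInter₂.2 fun _ hC => hC n ht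

theorem cloneGen_le {F : ∀ n : ℕ, Set ((Fin (n + 1) → X) → X)} {D : Clone X}
    (h : ∀ n, F n ⊆ D.carrier n) : cloneGen F ≤ D :=
  sInf_le h

end Clone

section Ideal

variable {P : Type v} [SemilatticeSup P]

theorem isIdealP_univ : IsIdealP (Set.univ : Set P) :=
  ⟨fun _ _ _ _ => trivial, fun _ _ _ _ => trivial⟩

theorem subset_idealGen (I : Set P) : I ⊆ idealGen I :=
  fun _ hp => Set.mem_sInter.2 fun _ hJ => hJ.2 hp

theorem idealGen_subset {I J : Set P} (hJ : IsIdealP J) (hIJ : I ⊆ J) : idealGen I ⊆ J :=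
  Set.sInter_subset_of_mem ⟨hJ, hIJ⟩

theorem isIdealP_idealGen (I : Set P) : IsIdealP (idealGen I) :=
  ⟨fun p q hpq hq => Set.mem_sInter.2 fun J hJ => hJ.1.1 p q hpq (Set.mem_sInter.1 hq J hJ),
    fun p q hp hq => Set.mem_sInter.2 fun J hJ =>
      hJ.1.2 p q (Set.mem_sInter.1 hp J hJ) (Set.mem_sInter.1 hq J hJ)⟩

end Ideal

theorem toFun1_injective {X : Type u} : Function.Injective (toFun1 (X := X)) := by
  intro v w hvw
  funext x
  have hx : x = fun _ => x 0 := funext fun j => congrArg x (Subsingleton.elim j 0)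
  rw [hx]
  exact congrFun hvw (x 0)

section Phi

variable {X : Type u} {P : Type v} {e0 e1 e2 e4 : X} {Af : P → Set X}

structure Admissible (e0 e1 e2 e4 : X) (Af : P → Set X) : Prop where
  ne01 : e0 ≠ e1
  ne02 : e0 ≠ e2
  ne04 : e0 ≠ e4
  ne12 : e1 ≠ e2
  ne14 : e1 ≠ e4
  subset_A : ∀ p, Af p ⊆ Aset e0 e1 e2 e4
  not_subset : ∀ {p q : P}, p ≠ q → ¬ Af p ⊆ Af q
  A_nonempty : (Aset e0 e1 e2 e4).Nonempty

theorem not_mem_Aset_of_eq_e0_or_e1 {x : X} (hx : x = e0 ∨ x = e1) : x ∉ Aset e0 e1 e2 e4 := by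
  rcases hx with rfl | rfl <;> simp [Aset]

theorem not_mem_Aset_of_eq_e2_or_e4 {x : X} (hx : x = e2 ∨ x = e4) : x ∉ Aset e0 e1 e2 e4 := by
  rcases hx with rfl | rfl <;> simp [Aset]

theorem phi_of_mem_Af {q : P} {a : X} (ha : a ∈ Af q) : phi e0 e1 e2 e4 Af q a = e1 :=
  if_pos ha

theorem phi_of_mem_Aset_of_not_mem_Af {q : P} {a : X} (hA : a ∈ Aset e0 e1 e2 e4)
    (ha : a ∉ Af q) : phi e0 e1 e2 e4 Af q a = e0 := by
  rw [phi, if_neg ha, if_pos hA]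

theorem phi_eq_e0_or_e1 (q : P) {a : X} (hA : a ∈ Aset e0 e1 e2 e4) :
    phi e0 e1 e2 e4 Af q a = e0 ∨ phi e0 e1 e2 e4 Af q a = e1 := by
  by_cases ha : a ∈ Af q
  · exact Or.inr (phi_of_mem_Af ha)
  · exact Or.inl (phi_of_mem_Aset_of_not_mem_Af hA ha)

theorem phi_ne_self (q : P) {a : X} (hA : a ∈ Aset e0 e1 e2 e4) : phi e0 e1 e2 e4 Af q a ≠ a :=
  fun hfix => not_mem_Aset_of_eq_e0_or_e1 (hfix ▸ phi_eq_e0_or_e1 q hA) hA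

theorem phi_eq_e2_or_e4 (hAf : ∀ p, Af p ⊆ Aset e0 e1 e2 e4) (q : P) {x : X}
    (hx : x ∉ Aset e0 e1 e2 e4) :
    phi e0 e1 e2 e4 Af q x = e2 ∨ phi e0 e1 e2 e4 Af q x = e4 := by
  rw [phi, if_neg fun h => hx (hAf q h), if_neg hx]
  split_ifs <;> simp

theorem mOp_eq_e2_or_e4 {p q1 q2 : P} {x y z : X}
    (h : ¬(y = phi e0 e1 e2 e4 Af q1 x ∧ z = phi e0 e1 e2 e4 Af q2 x)) :
    mOp e0 e1 e2 e4 Af p q1 q2 x y z = e2 ∨ mOp e0 e1 e2 e4 Af p q1 q2 x y z = e4 := by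
  rw [mOp, if_neg h]
  split_ifs <;> simp

theorem mOp_eq_e2_or_e4_of_not_mem_Aset (hAf : ∀ p, Af p ⊆ Aset e0 e1 e2 e4) (p q1 q2 : P)
    {x y z : X} (hx : x ∉ Aset e0 e1 e2 e4) :
    mOp e0 e1 e2 e4 Af p q1 q2 x y z = e2 ∨ mOp e0 e1 e2 e4 Af p q1 q2 x y z = e4 := by
  by_cases h : y = phi e0 e1 e2 e4 Af q1 x ∧ z = phi e0 e1 e2 e4 Af q2 x
  · rw [mOp, if_pos h]
    exact phi_eq_e2_or_e4 hAf p hx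
  · exact mOp_eq_e2_or_e4 h

theorem mOp_phi_phi (p q1 q2 : P) (x : X) :
    mOp e0 e1 e2 e4 Af p q1 q2 x (phi e0 e1 e2 e4 Af q1 x) (phi e0 e1 e2 e4 Af q2 x) =
      phi e0 e1 e2 e4 Af p x :=
  if_pos ⟨rfl, rfl⟩

namespace Admissible

theorem eq_of_eqOn_phi (h : Admissible e0 e1 e2 e4 Af) {q r : P}
    (hqr : Set.EqOn (phi e0 e1 e2 e4 Af q) (phi e0 e1 e2 e4 Af r) (Aset e0 e1 e2 e4)) : q = r := by
  by_contra hne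
  obtain ⟨a, haq, har⟩ := Set.not_subset.1 (h.not_subset hne)
  have hA := h.subset_A q haq
  have := hqr hA
  rw [phi_of_mem_Af haq, phi_of_mem_Aset_of_not_mem_Af hA har] at this
  exact h.ne01 this.symm

theorem not_distracted_phi (h : Admissible e0 e1 e2 e4 Af) (q : P) :
    ¬ Distracted e0 e1 e2 e4 (phi e0 e1 e2 e4 Af q) := by
  rintro ⟨a, hA, h24⟩
  rcases phi_eq_e0_or_e1 (Af := Af) q hA with h01 | h01 <;> rw [h01] at h24
  exacts [h24.elim h.ne02 h.ne04, h24.elim h.ne12 h.ne14]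

theorem phi_ne_id (h : Admissible e0 e1 e2 e4 Af) (q : P) : phi e0 e1 e2 e4 Af q ≠ id := by
  obtain ⟨a, hA⟩ := h.A_nonempty
  exact fun hid => phi_ne_self q hA (congrFun hid a)

end Admissible

def IsTame (e0 e1 e2 e4 : X) (Af : P → Set X) (J : Set P) (u : X → X) : Prop :=
  Distracted e0 e1 e2 e4 u ∨ u = id ∨ ∃ q ∈ J, u = phi e0 e1 e2 e4 Af q

namespace Admissible

theorem mem_of_isTame_phi (h : Admissible e0 e1 e2 e4 Af) {J : Set P} {q : P}
    (hq : IsTame e0 e1 e2 e4 Af J (phi e0 e1 e2 e4 Af q)) : q ∈ J := by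
  rcases hq with hD | hid | ⟨r, hr, hqr⟩
  · exact (h.not_distracted_phi q hD).elim
  · exact (h.phi_ne_id q hid).elim
  · exact h.eq_of_eqOn_phi (fun a _ => congrFun hqr a) ▸ hr

theorem eq_id_or_exists_not_mem_Aset (h : Admissible e0 e1 e2 e4 Af) {J : Set P} {u : X → X}
    (hu : IsTame e0 e1 e2 e4 Af J u) :
    u = id ∨ ∃ a ∈ Aset e0 e1 e2 e4, u a ∉ Aset e0 e1 e2 e4 := by
  rcases hu with ⟨a, hA, h24⟩ | hid | ⟨q, -, rfl⟩
  · exact Or.inr ⟨a, hA, not_mem_Aset_of_eq_e2_or_e4 h24⟩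
  · exact Or.inl hid
  · obtain ⟨a, hA⟩ := h.A_nonempty
    exact Or.inr ⟨a, hA, not_mem_Aset_of_eq_e0_or_e1 (phi_eq_e0_or_e1 q hA)⟩

theorem eq_phi_of_eqOn (h : Admissible e0 e1 e2 e4 Af) {J : Set P} {u : X → X} {r : P}
    (hu : IsTame e0 e1 e2 e4 Af J u)
    (hur : Set.EqOn u (phi e0 e1 e2 e4 Af r) (Aset e0 e1 e2 e4)) : u = phi e0 e1 e2 e4 Af r := by
  rcases hu with ⟨a, hA, h24⟩ | rfl | ⟨q, -, rfl⟩
  · exact (h.not_distracted_phi r ⟨a, hA, hur hA ▸ h24⟩).elim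
  · obtain ⟨a, hA⟩ := h.A_nonempty
    exact (phi_ne_self r hA (hur hA).symm).elim
  · rw [h.eq_of_eqOn_phi hur]

theorem isTame_phi_comp (h : Admissible e0 e1 e2 e4 Af) {J : Set P} {u : X → X} {r : P}
    (hr : r ∈ J) (hu : IsTame e0 e1 e2 e4 Af J u) :
    IsTame e0 e1 e2 e4 Af J (phi e0 e1 e2 e4 Af r ∘ u) := by
  rcases h.eq_id_or_exists_not_mem_Aset hu with rfl | ⟨a, hA, hua⟩
  · exact Or.inr (Or.inr ⟨r, hr, rfl⟩)
  · exact Or.inl ⟨a, hA, phi_eq_e2_or_e4 h.subset_A r hua⟩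

end Admissible

theorem PhiFam_subset {Q : Set P} {D : Clone X}
    (h : ∀ q ∈ Q, phi1 e0 e1 e2 e4 Af q ∈ D.carrier 0) :
    ∀ n, PhiFam e0 e1 e2 e4 Af Q n ⊆ D.carrier n
  | 0, _, ⟨q, hq, hf⟩ => hf ▸ h q hq
  | _ + 1, _, hf => hf.elim

end Phi

section Clones

variable {X : Type u} {P : Type v} [SemilatticeSup P] {e0 e1 e2 e4 : X} {Af : P → Set X}

theorem MFam_subset {D : Clone X}
    (h : ∀ p q1 q2 : P, p ≤ q1 ⊔ q2 → m3 e0 e1 e2 e4 Af p q1 q2 ∈ D.carrier 2) :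
    ∀ n, MFam e0 e1 e2 e4 Af n ⊆ D.carrier n
  | 2, _, ⟨p, q1, q2, hle, hf⟩ => hf ▸ h p q1 q2 hle
  | 0, _, hf => hf.elim
  | 1, _, hf => hf.elim
  | _ + 3, _, hf => hf.elim

theorem Admissible.isTame_mOp_comp (h : Admissible e0 e1 e2 e4 Af) {J : Set P} (hJ : IsIdealP J)
    {p q1 q2 : P} (hle : p ≤ q1 ⊔ q2) {u1 u2 u3 : X → X} (hu1 : IsTame e0 e1 e2 e4 Af J u1)
    (hu2 : IsTame e0 e1 e2 e4 Af J u2) (hu3 : IsTame e0 e1 e2 e4 Af J u3) :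
    IsTame e0 e1 e2 e4 Af J fun a => mOp e0 e1 e2 e4 Af p q1 q2 (u1 a) (u2 a) (u3 a) := by
  rcases h.eq_id_or_exists_not_mem_Aset hu1 with rfl | ⟨a, hA, hu1a⟩
  · by_cases hagree : ∀ a ∈ Aset e0 e1 e2 e4,
        u2 a = phi e0 e1 e2 e4 Af q1 a ∧ u3 a = phi e0 e1 e2 e4 Af q2 a
    · obtain rfl := h.eq_phi_of_eqOn hu2 fun a hA => (hagree a hA).1
      obtain rfl := h.eq_phi_of_eqOn hu3 fun a hA => (hagree a hA).2
      have hq1 := h.mem_of_isTame_phi hu2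
      have hq2 := h.mem_of_isTame_phi hu3
      exact Or.inr (Or.inr ⟨p, hJ.1 p _ hle (hJ.2 q1 q2 hq1 hq2), funext (mOp_phi_phi p q1 q2)⟩)
    · push Not at hagree
      obtain ⟨a, hA, hne⟩ := hagree
      exact Or.inl ⟨a, hA, mOp_eq_e2_or_e4 fun heq => hne heq.1 heq.2⟩
  · exact Or.inl ⟨a, hA, mOp_eq_e2_or_e4_of_not_mem_Aset h.subset_A p q1 q2 hu1a⟩

variable (e0 e1 e2 e4 Af) in
def tameClone (J : Set P) : Clone X where
  carrier n := {t | t ∈ (CClone e0 e1 e2 e4 Af).carrier n ∧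
    ∀ us : Fin (n + 1) → (Fin 1 → X) → X, (∀ i, us i ∈ (CClone e0 e1 e2 e4 Af).carrier 0) →
      (∀ i, IsTame e0 e1 e2 e4 Af J (toFun1 (us i))) →
      IsTame e0 e1 e2 e4 Af J (toFun1 fun x => t fun i => us i x)}
  proj_mem n i := ⟨(CClone e0 e1 e2 e4 Af).proj_mem n i, fun _ _ hus => hus i⟩
  comp_mem f g hf hg :=
    ⟨(CClone e0 e1 e2 e4 Af).comp_mem f g hf.1 fun i => (hg i).1, fun us hC hT =>
      hf.2 (fun j x => g j fun i => us i x)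
        (fun j => (CClone e0 e1 e2 e4 Af).comp_mem (g j) us (hg j).1 hC)
        (fun j => (hg j).2 us hC hT)⟩

theorem Admissible.phi1_mem_tameClone (h : Admissible e0 e1 e2 e4 Af) {J : Set P} {r : P}
    (hr : r ∈ J) : phi1 e0 e1 e2 e4 Af r ∈ (tameClone e0 e1 e2 e4 Af J).carrier 0 :=
  ⟨Clone.subset_cloneGen _ 0 (Or.inl ⟨r, trivial, rfl⟩), fun _ _ hT =>
    h.isTame_phi_comp hr (hT 0)⟩

theorem Admissible.m3_mem_tameClone (h : Admissible e0 e1 e2 e4 Af) {J : Set P}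
    (hJ : IsIdealP J) {p q1 q2 : P} (hle : p ≤ q1 ⊔ q2) :
    m3 e0 e1 e2 e4 Af p q1 q2 ∈ (tameClone e0 e1 e2 e4 Af J).carrier 2 :=
  ⟨Clone.subset_cloneGen _ 2 (Or.inr ⟨p, q1, q2, hle, rfl⟩), fun _ _ hT =>
    h.isTame_mOp_comp hJ hle (hT 0) (hT 1) (hT 2)⟩

theorem Admissible.CClone_le_tameClone (h : Admissible e0 e1 e2 e4 Af) :
    CClone e0 e1 e2 e4 Af ≤ tameClone e0 e1 e2 e4 Af Set.univ :=
  Clone.cloneGen_le fun n => Set.union_subset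
    (PhiFam_subset (fun _ hr => h.phi1_mem_tameClone hr) n)
    (MFam_subset (fun _ _ _ hle => h.m3_mem_tameClone isIdealP_univ hle) n)

theorem isTame_of_mem_tameClone {J : Set P} {u : (Fin 1 → X) → X}
    (hu : u ∈ (tameClone e0 e1 e2 e4 Af J).carrier 0) : IsTame e0 e1 e2 e4 Af J (toFun1 u) :=
  hu.2 (fun _ x => x 0) (fun _ => (CClone e0 e1 e2 e4 Af).proj_mem 0 0)
    (fun _ => Or.inr (Or.inl rfl))

theorem Admissible.spoilt_mem_tameClone (h : Admissible e0 e1 e2 e4 Af) (J : Set P) {n : ℕ}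
    {t : (Fin (n + 1) → X) → X} (ht : t ∈ SpoiltFam e0 e1 e2 e4 Af n) :
    t ∈ (tameClone e0 e1 e2 e4 Af J).carrier n := by
  refine ⟨ht.1, fun us hus _ => ?_⟩
  have hC := (CClone e0 e1 e2 e4 Af).comp_mem t us ht.1 hus
  rcases isTame_of_mem_tameClone (h.CClone_le_tameClone 0 hC) with hD | hid | ⟨q, -, hq⟩
  · exact Or.inl hD
  · exact Or.inr (Or.inl hid)
  · exact (ht.2 ⟨us, hus, q, trivial, toFun1_injective hq⟩).elim

theorem Admissible.CI_le_tameClone (h : Admissible e0 e1 e2 e4 Af) {I J : Set P}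
    (hJ : IsIdealP J) (hIJ : I ⊆ J) : CI e0 e1 e2 e4 Af I ≤ tameClone e0 e1 e2 e4 Af J :=
  Clone.cloneGen_le fun n => Set.union_subset (Set.union_subset
    (PhiFam_subset (fun _ hr => h.phi1_mem_tameClone (hIJ hr)) n)
    (MFam_subset (fun _ _ _ hle => h.m3_mem_tameClone hJ hle) n))
    fun _ => h.spoilt_mem_tameClone J

theorem Admissible.mem_idealGen_of_phi1_mem_CI (h : Admissible e0 e1 e2 e4 Af) {I : Set P}
    {p : P} (hp : phi1 e0 e1 e2 e4 Af p ∈ (CI e0 e1 e2 e4 Af I).carrier 0) : p ∈ idealGen I :=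
  h.mem_of_isTame_phi <| isTame_of_mem_tameClone <|
    h.CI_le_tameClone (isIdealP_idealGen I) (subset_idealGen I) 0 hp

theorem phi1_mem_CI_of_le {I : Set P} {p q1 q2 : P} (hle : p ≤ q1 ⊔ q2)
    (h1 : phi1 e0 e1 e2 e4 Af q1 ∈ (CI e0 e1 e2 e4 Af I).carrier 0)
    (h2 : phi1 e0 e1 e2 e4 Af q2 ∈ (CI e0 e1 e2 e4 Af I).carrier 0) :
    phi1 e0 e1 e2 e4 Af p ∈ (CI e0 e1 e2 e4 Af I).carrier 0 := by
  have hm : m3 e0 e1 e2 e4 Af p q1 q2 ∈ (CI e0 e1 e2 e4 Af I).carrier 2 :=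
    Clone.subset_cloneGen _ 2 (Or.inl (Or.inr ⟨p, q1, q2, hle, rfl⟩))
  have hargs : ∀ j : Fin 3,
      ![fun x => x 0, phi1 e0 e1 e2 e4 Af q1, phi1 e0 e1 e2 e4 Af q2] j ∈
        (CI e0 e1 e2 e4 Af I).carrier 0 := by
    intro j
    fin_cases j
    exacts [(CI e0 e1 e2 e4 Af I).proj_mem 0 0, h1, h2]
  convert (CI e0 e1 e2 e4 Af I).comp_mem _ _ hm hargs using 1
  funext x
  exact (mOp_phi_phi p q1 q2 (x 0)).symm

theorem phi1_mem_CI_of_mem_idealGen {I : Set P} {p : P} (hp : p ∈ idealGen I) :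
    phi1 e0 e1 e2 e4 Af p ∈ (CI e0 e1 e2 e4 Af I).carrier 0 := by
  have hideal : IsIdealP {q | phi1 e0 e1 e2 e4 Af q ∈ (CI e0 e1 e2 e4 Af I).carrier 0} :=
    ⟨fun _ _ hpq hq => phi1_mem_CI_of_le (hpq.trans le_sup_left) hq hq,
      fun _ _ hp hq => phi1_mem_CI_of_le le_rfl hp hq⟩
  exact idealGen_subset hideal
    (fun q hq => Clone.subset_cloneGen _ 0 (Or.inl (Or.inl ⟨q, hq, rfl⟩))) hp

end Clones

theorem phi_mem_CI_iff_general
    {X : Type u} {P : Type v} [Infinite X] [SemilatticeSup P]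
    (e0 e1 e2 e4 : X)
    (hdist : e0 ≠ e1 ∧ e0 ≠ e2 ∧ e0 ≠ e4 ∧ e1 ≠ e2 ∧ e1 ≠ e4 ∧ e2 ≠ e4)
    (Af : P → Set X) (hAf : ∀ p : P, Af p ⊆ Aset e0 e1 e2 e4)
    (hcover : ∀ (p : P) (k : ℕ) (q : Fin k → P),
      (∀ i, p ≠ q i) → ¬ Af p ⊆ ⋃ i, Af (q i))
    (p : P) (I : Set P) :
    phi1 e0 e1 e2 e4 Af p ∈ (CI e0 e1 e2 e4 Af I).carrier 0 ↔ p ∈ idealGen I := by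
  obtain ⟨h01, h02, h04, h12, h14, -⟩ := hdist
  have h : Admissible e0 e1 e2 e4 Af :=
    { ne01 := h01, ne02 := h02, ne04 := h04, ne12 := h12, ne14 := h14, subset_A := hAf
      not_subset := fun hpq hsub => hcover _ 1 (fun _ => _) (fun _ => hpq)
        (hsub.trans (Set.subset_iUnion_of_subset 0 subset_rfl))
      A_nonempty := (Set.toFinite _).infinite_compl.nonempty }
  exact ⟨h.mem_idealGen_of_phi1_mem_CI, phi1_mem_CI_of_mem_idealGen⟩

/-- Lemma 7: `φ_p ∈ C_I` iff `p` lies in the ideal of `P` generated by `I`. -/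
theorem phi_mem_CI_iff
    {X : Type u} {P : Type v} [Infinite X] [SemilatticeSup P]
    (e0 e1 e2 e4 : X)
    (hdist : e0 ≠ e1 ∧ e0 ≠ e2 ∧ e0 ≠ e4 ∧ e1 ≠ e2 ∧ e1 ≠ e4 ∧ e2 ≠ e4)
    (hcard : Cardinal.lift.{u} (Cardinal.mk P) ≤ Cardinal.lift.{v} (2 ^ Cardinal.mk X))
    (Af : P → Set X) (hAf : ∀ p : P, Af p ⊆ Aset e0 e1 e2 e4)
    (hcover : ∀ (p : P) (k : ℕ) (q : Fin k → P),
      (∀ i, p ≠ q i) → ¬ Af p ⊆ ⋃ i, Af (q i))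
    (p : P) (I : Set P) :
    phi1 e0 e1 e2 e4 Af p ∈ (CI e0 e1 e2 e4 Af I).carrier 0 ↔ p ∈ idealGen I :=
  phi_mem_CI_iff_general e0 e1 e2 e4 hdist Af hAf hcover p I
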